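/- arXiv:2301.03071 — 2 statements merged into one kernel-verified Lean document; each statement's English description precedes it below -/
import Mathlib

section
/- If m₁, m₂, m₃ satisfy the geodesic timelike system m₁' = m₃κ − h, m₂' = −m₃τ, m₃' = m₁κ + m₂τ with κ, τ nonvanishing differentiable functions, then m₁ satisfies (1/κ)((1/κ)(m₁'+h))'' + [(1/κ)' − (1/τ)(τ/κ)'] ((1/κ)(m₁'+h))' + (τ/κ)²(m₁'+h) + (τ/κ)' (κ/τ) m₁ − m₁' = 0. -/
/-- For the timelike geodesic system m₁' = m₃κ − h, m₂' = −m₃τ, m₃' = m₁κ + m₂τ,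
the function m₁ satisfies the third-order differential equation (3.9). -/
theorem geodesic_third_order_ode (I : Set ℝ) (hI : IsOpen I)
    (κ τ h m₁ m₂ m₃ : ℝ → ℝ)
    (hκ : ContDiff ℝ (⊤ : ℕ∞) κ) (hτ : ContDiff ℝ (⊤ : ℕ∞) τ) (hh : ContDiff ℝ (⊤ : ℕ∞) h)
    (hm₁ : ContDiff ℝ (⊤ : ℕ∞) m₁) (hm₂ : ContDiff ℝ (⊤ : ℕ∞) m₂) (hm₃ : ContDiff ℝ (⊤ : ℕ∞) m₃)
    (hκ0 : ∀ s ∈ I, κ s ≠ 0) (hτ0 : ∀ s ∈ I, τ s ≠ 0)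
    (h1 : ∀ s ∈ I, deriv m₁ s = m₃ s * κ s - h s)
    (h2 : ∀ s ∈ I, deriv m₂ s = -(m₃ s) * τ s)
    (h3 : ∀ s ∈ I, deriv m₃ s = m₁ s * κ s + m₂ s * τ s) :
    ∀ s ∈ I,
      (1 / κ s) *
        deriv (deriv (fun t => (1 / κ t) * (deriv m₁ t + h t))) s +
      (deriv (fun t => 1 / κ t) s - (1 / τ s) * deriv (fun t => τ t / κ t) s) *
        deriv (fun t => (1 / κ t) * (deriv m₁ t + h t)) s +
      (τ s / κ s) ^ 2 * (deriv m₁ s + h s) +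
      deriv (fun t => τ t / κ t) s * (κ s / τ s) * m₁ s - deriv m₁ s = 0 := by
  intro s hs
  have dκ := (hκ.differentiable (by simp))
  have dτ := (hτ.differentiable (by simp))
  have dm₁ := (hm₁.differentiable (by simp))
  have dm₂ := (hm₂.differentiable (by simp))
  have dm₃ := (hm₃.differentiable (by simp))
  have hnI : I ∈ nhds s := hI.mem_nhds hs
  -- F = m₃ on I
  have hF : ∀ t ∈ I, (1 / κ t) * (deriv m₁ t + h t) = m₃ t := by
    intro t ht
    rw [h1 t ht]
    field_simp [hκ0 t ht]
    ring
  have hFeq : (fun t => (1 / κ t) * (deriv m₁ t + h t)) =ᶠ[nhds s] m₃ :=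
    Filter.eventuallyEq_of_mem hnI hF
  -- first derivative of F
  have hdF : ∀ t ∈ I,
      deriv (fun u => (1 / κ u) * (deriv m₁ u + h u)) t = m₁ t * κ t + m₂ t * τ t := by
    intro t ht
    have hFeqt : (fun u => (1 / κ u) * (deriv m₁ u + h u)) =ᶠ[nhds t] m₃ :=
      Filter.eventuallyEq_of_mem (hI.mem_nhds ht) hF
    rw [hFeqt.deriv_eq, h3 t ht]
  have hdFeq : deriv (fun u => (1 / κ u) * (deriv m₁ u + h u)) =ᶠ[nhds s]
      (fun t => m₁ t * κ t + m₂ t * τ t) :=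
    Filter.eventuallyEq_of_mem hnI hdF
  have hddF : deriv (deriv (fun u => (1 / κ u) * (deriv m₁ u + h u))) s
      = deriv m₁ s * κ s + m₁ s * deriv κ s + deriv m₂ s * τ s + m₂ s * deriv τ s := by
    rw [hdFeq.deriv_eq]
    have : HasDerivAt (fun t => m₁ t * κ t + m₂ t * τ t)
        (deriv m₁ s * κ s + m₁ s * deriv κ s + (deriv m₂ s * τ s + m₂ s * deriv τ s)) s :=
      (((dm₁ s).hasDerivAt.mul (dκ s).hasDerivAt).add
        ((dm₂ s).hasDerivAt.mul (dτ s).hasDerivAt))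
    rw [this.deriv]; ring
  -- deriv of 1/κ and τ/κ
  have hκs := hκ0 s hs
  have hτs := hτ0 s hs
  have hinv : deriv (fun t => 1 / κ t) s = -deriv κ s / (κ s) ^ 2 := by
    have : HasDerivAt (fun t => 1 / κ t) (-(deriv κ s) / (κ s) ^ 2) s := by
      simpa [Pi.div_def] using ((hasDerivAt_const s (1:ℝ)).div (dκ s).hasDerivAt hκs)
    rw [this.deriv]
  have hquot : deriv (fun t => τ t / κ t) s
      = (deriv τ s * κ s - τ s * deriv κ s) / (κ s) ^ 2 := by
    have : HasDerivAt (fun t => τ t / κ t)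
        ((deriv τ s * κ s - τ s * deriv κ s) / (κ s) ^ 2) s :=
      (dτ s).hasDerivAt.div (dκ s).hasDerivAt hκs
    rw [this.deriv]
  rw [hddF, hdFeq.self_of_nhds, hinv, hquot, h1 s hs, h2 s hs]
  field_simp
  ring
end

section
/- Every solution of the ODE y'' − (τ'/τ) y' + τ² y = 0, where τ is a nonvanishing differentiable function, is of the form y(s) = b₁ cos(w(s)) + b₂ sin(w(s)) with w an antiderivative of τ and b₁, b₂ real constants. -/
/-!
With `p = y' / τ` the equation becomes the first-order system `y' = τ p`, `p' = -τ y`: the point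
`(y, p)` rotates with angular velocity `τ = w'`. Rotating back by the angle `w` therefore gives
two constants `b₁ = y cos w - p sin w` and `b₂ = y sin w + p cos w`, and `y = b₁ cos w + b₂ sin w`.
-/

open Real

theorem Convex.eq_of_forall_hasDerivAt_zero {I : Set ℝ} (hI : Convex ℝ I) {f : ℝ → ℝ}
    (hf : ∀ s ∈ I, HasDerivAt f 0 s) {a b : ℝ} (ha : a ∈ I) (hb : b ∈ I) : f a = f b := by
  have h := hI.norm_image_sub_le_of_norm_hasDerivWithin_le (C := 0)
    (fun s hs => (hf s hs).hasDerivWithinAt) (fun _ _ => norm_zero.le) ha hb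
  rw [zero_mul, norm_le_zero_iff, sub_eq_zero] at h
  exact h.symm

theorem hasDerivAt_div_of_ode {τ y y' : ℝ → ℝ} {s τ' y'' : ℝ} (hτ : HasDerivAt τ τ' s)
    (hτs : τ s ≠ 0) (hy' : HasDerivAt y' y'' s)
    (hode : y'' - (τ' / τ s) * y' s + τ s ^ 2 * y s = 0) :
    HasDerivAt (fun t => y' t / τ t) (-(τ s * y s)) s := by
  refine (hy'.div hτ hτs).congr_deriv ?_
  rw [show y'' = (τ' / τ s) * y' s - τ s ^ 2 * y s by linarith]
  field_simp
  ring

theorem Convex.exists_eq_cos_add_sin_of_rotation {I : Set ℝ} (hI : Convex ℝ I)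
    {τ w y p : ℝ → ℝ} (hw : ∀ s ∈ I, HasDerivAt w (τ s) s)
    (hy : ∀ s ∈ I, HasDerivAt y (τ s * p s) s) (hp : ∀ s ∈ I, HasDerivAt p (-(τ s * y s)) s) :
    ∃ b₁ b₂ : ℝ, ∀ s ∈ I, y s = b₁ * cos (w s) + b₂ * sin (w s) := by
  rcases I.eq_empty_or_nonempty with rfl | ⟨s₀, hs₀⟩
  · exact ⟨0, 0, by simp⟩
  set b₁ : ℝ → ℝ := fun s => y s * cos (w s) - p s * sin (w s)
  set b₂ : ℝ → ℝ := fun s => y s * sin (w s) + p s * cos (w s)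
  have hb₁ : ∀ s ∈ I, HasDerivAt b₁ 0 s := fun s hs =>
    (((hy s hs).mul ((hw s hs).cos)).sub ((hp s hs).mul ((hw s hs).sin))).congr_deriv (by ring)
  have hb₂ : ∀ s ∈ I, HasDerivAt b₂ 0 s := fun s hs =>
    (((hy s hs).mul ((hw s hs).sin)).add ((hp s hs).mul ((hw s hs).cos))).congr_deriv (by ring)
  refine ⟨b₁ s₀, b₂ s₀, fun s hs => ?_⟩
  rw [hI.eq_of_forall_hasDerivAt_zero hb₁ hs₀ hs, hI.eq_of_forall_hasDerivAt_zero hb₂ hs₀ hs]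
  linear_combination (-(y s)) * sin_sq_add_cos_sq (w s)

theorem ode_solution_trig_general (I : Set ℝ) (hconv : Convex ℝ I)
    (τ w y y' y'' : ℝ → ℝ)
    (hτ : ContDiff ℝ 1 τ) (hτ0 : ∀ s ∈ I, τ s ≠ 0)
    (hw : ∀ s ∈ I, HasDerivAt w (τ s) s)
    (hy : ∀ s ∈ I, HasDerivAt y (y' s) s)
    (hy' : ∀ s ∈ I, HasDerivAt y' (y'' s) s)
    (hode : ∀ s ∈ I, y'' s - (deriv τ s / τ s) * y' s + (τ s) ^ 2 * y s = 0) :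
    ∃ b₁ b₂ : ℝ, ∀ s ∈ I, y s = b₁ * Real.cos (w s) + b₂ * Real.sin (w s) := by
  have hτ' : ∀ s, HasDerivAt τ (deriv τ s) s := fun s =>
    (hτ.differentiable one_ne_zero s).hasDerivAt
  refine hconv.exists_eq_cos_add_sin_of_rotation hw (p := fun t => y' t / τ t)
    (fun s hs => (hy s hs).congr_deriv ?_)
    (fun s hs => hasDerivAt_div_of_ode (hτ' s) (hτ0 s hs) (hy' s hs) (hode s hs))
  field_simp [hτ0 s hs]

/-- Every solution of y'' − (τ'/τ)y' + τ²y = 0 with τ nonvanishing C¹ is of the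
form y = b₁ cos∘w + b₂ sin∘w, where w is an antiderivative of τ. -/
theorem ode_solution_trig (I : Set ℝ) (hI : IsOpen I) (hconv : Convex ℝ I)
    (τ w y y' y'' : ℝ → ℝ)
    (hτ : ContDiff ℝ 1 τ) (hτ0 : ∀ s ∈ I, τ s ≠ 0)
    (hw : ∀ s ∈ I, HasDerivAt w (τ s) s)
    (hy : ∀ s ∈ I, HasDerivAt y (y' s) s)
    (hy' : ∀ s ∈ I, HasDerivAt y' (y'' s) s)
    (hode : ∀ s ∈ I, y'' s - (deriv τ s / τ s) * y' s + (τ s) ^ 2 * y s = 0) :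
    ∃ b₁ b₂ : ℝ, ∀ s ∈ I, y s = b₁ * Real.cos (w s) + b₂ * Real.sin (w s) :=
  ode_solution_trig_general I hconv τ w y y' y'' hτ hτ0 hw hy hy' hode
end
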